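/- arXiv:1812.06483 — 2 statements merged into one kernel-verified Lean document; each statement's English description precedes it below -/
import Mathlib

section
/- Let 𝒜 be a unital C*-algebra and (V, V⁺, e) an AOU 𝒜-space. Suppose (Q_n)_{n∈ℕ} is an operator 𝒜-system structure on V with Q_1 = V⁺ such that, for every operator 𝒜-system S, every positive 𝒜-bimodule map φ: S → (V, (Q_n), e) is completely positive. Then Q_n = C_n^{min}(V;𝒜) for every n ∈ ℕ; that is, the identity map of V is a unital 𝒜-bimodule complete order isomorphism from (V, (Q_n), e) onto omin_𝒜(V) := (V, (C_n^{min}(V;𝒜)), e). -/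
open Matrix

noncomputable section

/-- An AOU `𝒜`-space: an Archimedean order unit *-vector space `(V, pos, e)` which is an
`A`-bimodule (actions `l`, `r`) satisfying `(a·x)* = x*·a*`, `a·e = e·a` and
`a*·x·a ∈ V⁺` for `x ∈ V⁺`. -/
structure AOUPack (A V : Type*) [Ring A] [StarRing A] [Algebra ℂ A]
    [AddCommGroup V] [Module ℂ V] [StarAddMonoid V] [StarModule ℂ V] where
  /-- the left action `a · x` -/
  l : A → V → V
  /-- the right action `x · a` -/
  r : V → A → V
  /-- the cone `V⁺` of positive elements -/
  pos : Set V
  /-- the Archimedean order unit -/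
  e : V
  l_add : ∀ a b x, l (a + b) x = l a x + l b x
  add_l : ∀ a x y, l a (x + y) = l a x + l a y
  smul_l : ∀ (c : ℂ) a x, l (c • a) x = c • l a x
  l_smul : ∀ (c : ℂ) a x, l a (c • x) = c • l a x
  r_add : ∀ x y a, r (x + y) a = r x a + r y a
  add_r : ∀ x a b, r x (a + b) = r x a + r x b
  smul_r : ∀ (c : ℂ) x a, r (c • x) a = c • r x a
  r_smul : ∀ (c : ℂ) x a, r x (c • a) = c • r x a
  mul_l : ∀ a b x, l (a * b) x = l a (l b x)
  mul_r : ∀ x a b, r x (a * b) = r (r x a) b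
  l_r_assoc : ∀ a x b, r (l a x) b = l a (r x b)
  one_l : ∀ x, l 1 x = x
  star_l : ∀ a x, star (l a x) = r (star x) (star a)
  pos_isSelfAdjoint : ∀ x ∈ pos, star x = x
  pos_add_mem : ∀ x ∈ pos, ∀ y ∈ pos, x + y ∈ pos
  pos_smul_mem : ∀ (t : ℝ), 0 ≤ t → ∀ x ∈ pos, (t : ℂ) • x ∈ pos
  pos_nonempty : pos.Nonempty
  pos_salient : ∀ x ∈ pos, -x ∈ pos → x = 0
  e_isSelfAdjoint : star e = e
  e_orderUnit : ∀ x, star x = x → ∃ t : ℝ, 0 < t ∧ (t : ℂ) • e - x ∈ pos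
  e_arch : ∀ x, (∀ t : ℝ, 0 < t → x + (t : ℂ) • e ∈ pos) → x ∈ pos
  e_comm : ∀ a, l a e = r e a
  conj_mem : ∀ a, ∀ x ∈ pos, r (l (star a) x) a ∈ pos

namespace AOUPack

variable {A V : Type*} [Ring A] [StarRing A] [Algebra ℂ A]
  [AddCommGroup V] [Module ℂ V] [StarAddMonoid V] [StarModule ℂ V]

variable (P : AOUPack A V)

/-- The action of a matrix over `A` on a matrix over `V` from the left:
`(M · X)_{ij} = Σ_p M_{ip} · X_{pj}`. -/
def amul {k m n : ℕ} (M : Matrix (Fin k) (Fin m) A) (X : Matrix (Fin m) (Fin n) V) :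
    Matrix (Fin k) (Fin n) V :=
  Matrix.of fun i j => ∑ p, P.l (M i p) (X p j)

/-- The action of a matrix over `A` on a matrix over `V` from the right:
`(X · N)_{ij} = Σ_p X_{ip} · N_{pj}`. -/
def vmul {m n l : ℕ} (X : Matrix (Fin m) (Fin n) V) (N : Matrix (Fin n) (Fin l) A) :
    Matrix (Fin m) (Fin l) V :=
  Matrix.of fun i j => ∑ p, P.r (X i p) (N p j)

/-- The congruence `M* · X · M` of `X ∈ M_m(V)` by `M ∈ M_{m,n}(A)`. -/
def conj {m n : ℕ} (M : Matrix (Fin m) (Fin n) A) (X : Matrix (Fin m) (Fin m) V) :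
    Matrix (Fin n) (Fin n) V :=
  P.vmul (P.amul Mᴴ X) M

/-- The diagonal matrix `e_n ∈ M_n(V)` with all diagonal entries equal to `e`. -/
def matE (n : ℕ) : Matrix (Fin n) (Fin n) V := Matrix.diagonal fun _ => P.e

/-- `C_n^{min}(V; A)`: hermitian `X ∈ M_n(V)` with `C* · X · C ∈ V⁺` for every
column `C ∈ M_{n,1}(A)`. -/
def Cmin (n : ℕ) : Set (Matrix (Fin n) (Fin n) V) :=
  {X | Xᴴ = X ∧ ∀ C : Matrix (Fin n) (Fin 1) A, P.conj C X 0 0 ∈ P.pos}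

/-- `D_n^{max}(V; A)`: finite sums `Σ_i A_i* · x_i · A_i` with `x_i ∈ V⁺` and
`A_i ∈ M_{1,n}(A)`. -/
def Dmax (n : ℕ) : Set (Matrix (Fin n) (Fin n) V) :=
  {X | ∃ (k : ℕ) (x : Fin k → V) (a : Fin k → Matrix (Fin 1) (Fin n) A),
    (∀ i, x i ∈ P.pos) ∧ X = ∑ i, P.conj (a i) (Matrix.of fun _ _ => x i)}

/-- `C_n^{max}(V; A) = {X : X + r e_n ∈ D_n^{max}(V; A) for all r > 0}`. -/
def Cmax (n : ℕ) : Set (Matrix (Fin n) (Fin n) V) :=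
  {X | ∀ t : ℝ, 0 < t → X + (t : ℂ) • P.matE n ∈ P.Dmax n}

/-- `Q` is an operator `A`-system structure on `V`: an `A`-compatible matrix ordering
with `Q 1 = V⁺` such that `e_n` is an Archimedean order unit for `Q n` for every `n`. -/
structure IsOperatorSystemStructure (Q : ∀ n : ℕ, Set (Matrix (Fin n) (Fin n) V)) : Prop where
  herm : ∀ n, ∀ X ∈ Q n, Xᴴ = X
  add_mem : ∀ n, ∀ X ∈ Q n, ∀ Y ∈ Q n, X + Y ∈ Q n
  smul_mem : ∀ n (t : ℝ), 0 ≤ t → ∀ X ∈ Q n, (t : ℂ) • X ∈ Q n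
  nonempty : ∀ n, (Q n).Nonempty
  salient : ∀ n, ∀ X ∈ Q n, -X ∈ Q n → X = 0
  compat : ∀ m n (X : Matrix (Fin m) (Fin m) V) (M : Matrix (Fin m) (Fin n) A),
    X ∈ Q m → P.conj M X ∈ Q n
  level_one : ∀ X : Matrix (Fin 1) (Fin 1) V, X ∈ Q 1 ↔ X 0 0 ∈ P.pos
  orderUnit : ∀ n (X : Matrix (Fin n) (Fin n) V), Xᴴ = X →
    ∃ t : ℝ, 0 < t ∧ (t : ℂ) • P.matE n - X ∈ Q n
  arch : ∀ n (X : Matrix (Fin n) (Fin n) V),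
    (∀ t : ℝ, 0 < t → X + (t : ℂ) • P.matE n ∈ Q n) → X ∈ Q n

end AOUPack

/-!
Compressing by columns `C ∈ M_{n,1}(𝒜)` and using `Q_1 = V⁺` gives `Q_n ⊆ C_n^{min}(V;𝒜)`.
Conversely `(C_n^{min})` is itself an operator `𝒜`-system structure on `V`: it inherits the
order unit property from `(Q_n)`, and it is salient by polarization against scalar columns
`(c_p 1)_p`. The identity `(V, C^{min}) → (V, Q)` is a positive bimodule map, so by the
universal property it is completely positive, i.e. `C_n^{min} ⊆ Q_n`.
-/

namespace Matrix

variable {ι V : Type*} [Fintype ι] [AddCommGroup V] [Module ℂ V]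

def sesq (X : Matrix ι ι V) (c d : ι → ℂ) : V :=
  ∑ q, ∑ p, (star (c p) * d q) • X p q

lemma sesq_add_left (X : Matrix ι ι V) (c c' d : ι → ℂ) :
    X.sesq (c + c') d = X.sesq c d + X.sesq c' d := by
  simp [sesq, add_mul, add_smul, Finset.sum_add_distrib]

lemma sesq_add_right (X : Matrix ι ι V) (c d d' : ι → ℂ) :
    X.sesq c (d + d') = X.sesq c d + X.sesq c d' := by
  simp [sesq, mul_add, add_smul, Finset.sum_add_distrib]

lemma sesq_neg (X : Matrix ι ι V) (c d : ι → ℂ) : (-X).sesq c d = -X.sesq c d := by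
  simp [sesq, smul_neg, ← Finset.sum_neg_distrib]

lemma sesq_single_single [DecidableEq ι] (X : Matrix ι ι V) (j k : ι) (α β : ℂ) :
    X.sesq (Pi.single j α) (Pi.single k β) = (star α * β) • X j k := by
  simp [sesq, Pi.single_apply, apply_ite (starRingEnd ℂ), ite_mul, ite_smul]

lemma eq_zero_of_forall_sesq_self_eq_zero (X : Matrix ι ι V) (hX : ∀ c, X.sesq c c = 0) :
    X = 0 := by
  classical
  have h_diag (i : ι) : X i i = 0 := by
    simpa [sesq_single_single] using hX (Pi.single i 1)
  ext i j
  have h_re := hX (Pi.single i 1 + Pi.single j 1)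
  have h_im := hX (Pi.single i 1 + Pi.single j Complex.I)
  simp only [sesq_add_left, sesq_add_right, sesq_single_single, h_diag, star_one, one_mul,
    mul_one, one_smul, smul_zero, zero_add, add_zero, Complex.star_def, Complex.conj_I] at h_re h_im
  have h_two : (2 : ℂ) • X i j = 0 := by
    linear_combination (norm := skip) h_re - Complex.I • h_im
    simp only [smul_add, smul_smul, mul_neg, Complex.I_mul_I]
    module
  simpa using h_two

end Matrix

namespace AOUPack

variable {A V : Type*} [Ring A] [StarRing A] [Algebra ℂ A]
  [AddCommGroup V] [Module ℂ V] [StarAddMonoid V] [StarModule ℂ V]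
  (P : AOUPack A V)

lemma l_zero (a : A) : P.l a 0 = 0 :=
  (AddMonoidHom.mk' (P.l a) (P.add_l a)).map_zero

lemma r_zero (a : A) : P.r 0 a = 0 :=
  (AddMonoidHom.mk' (fun x => P.r x a) (fun x y => P.r_add x y a)).map_zero

lemma l_sum {ι : Type*} (a : A) (s : Finset ι) (f : ι → V) :
    P.l a (∑ i ∈ s, f i) = ∑ i ∈ s, P.l a (f i) :=
  map_sum (AddMonoidHom.mk' (P.l a) (P.add_l a)) f s

lemma sum_l {ι : Type*} (x : V) (s : Finset ι) (f : ι → A) :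
    P.l (∑ i ∈ s, f i) x = ∑ i ∈ s, P.l (f i) x :=
  map_sum (AddMonoidHom.mk' (fun a => P.l a x) (fun a b => P.l_add a b x)) f s

lemma r_sum {ι : Type*} (a : A) (s : Finset ι) (f : ι → V) :
    P.r (∑ i ∈ s, f i) a = ∑ i ∈ s, P.r (f i) a :=
  map_sum (AddMonoidHom.mk' (fun x => P.r x a) (fun x y => P.r_add x y a)) f s

lemma sum_r {ι : Type*} (x : V) (s : Finset ι) (f : ι → A) :
    P.r x (∑ i ∈ s, f i) = ∑ i ∈ s, P.r x (f i) :=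
  map_sum (AddMonoidHom.mk' (P.r x) (P.add_r x)) f s

lemma r_one (x : V) : P.r x 1 = x := by
  simpa [P.one_l] using (P.star_l 1 (star x)).symm

lemma star_r (x : V) (a : A) : star (P.r x a) = P.l (star a) (star x) := by
  rw [← star_star (P.l _ _), P.star_l, star_star, star_star]

lemma zero_mem_pos : (0 : V) ∈ P.pos := by
  obtain ⟨x, hx⟩ := P.pos_nonempty
  simpa using P.pos_smul_mem 0 le_rfl x hx

lemma sum_mem_pos {ι : Type*} (s : Finset ι) (f : ι → V) (h : ∀ i ∈ s, f i ∈ P.pos) :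
    ∑ i ∈ s, f i ∈ P.pos :=
  Finset.sum_induction f (· ∈ P.pos) (fun x y hx hy => P.pos_add_mem x hx y hy) P.zero_mem_pos h

lemma e_mem_pos : P.e ∈ P.pos := by
  obtain ⟨t, ht, h⟩ := P.e_orderUnit (-P.e) (by rw [star_neg, P.e_isSelfAdjoint])
  have h_eq : (t : ℂ) • P.e - -P.e = ((t + 1 : ℝ) : ℂ) • P.e := by push_cast; module
  have h' := P.pos_smul_mem (t + 1)⁻¹ (by positivity) _ h
  rwa [h_eq, smul_smul, ← Complex.ofReal_mul, inv_mul_cancel₀ (by positivity),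
    Complex.ofReal_one, one_smul] at h'
lemma amul_amul {k m n l : ℕ} (M : Matrix (Fin k) (Fin m) A)
    (N : Matrix (Fin m) (Fin n) A) (X : Matrix (Fin n) (Fin l) V) :
    P.amul M (P.amul N X) = P.amul (M * N) X := by
  ext i j
  simp only [amul, Matrix.of_apply, P.l_sum, Matrix.mul_apply, P.sum_l, P.mul_l]
  exact Finset.sum_comm

lemma vmul_vmul {k m n l : ℕ} (X : Matrix (Fin k) (Fin m) V)
    (M : Matrix (Fin m) (Fin n) A) (N : Matrix (Fin n) (Fin l) A) :
    P.vmul (P.vmul X M) N = P.vmul X (M * N) := by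
  ext i j
  simp only [vmul, Matrix.of_apply, P.r_sum, Matrix.mul_apply, P.sum_r, P.mul_r]
  exact Finset.sum_comm

lemma amul_vmul {k m n l : ℕ} (M : Matrix (Fin k) (Fin m) A)
    (X : Matrix (Fin m) (Fin n) V) (N : Matrix (Fin n) (Fin l) A) :
    P.amul M (P.vmul X N) = P.vmul (P.amul M X) N := by
  ext i j
  simp only [amul, vmul, Matrix.of_apply, P.l_sum, P.r_sum, P.l_r_assoc]
  exact Finset.sum_comm

lemma conj_conj {m n k : ℕ} (M : Matrix (Fin m) (Fin n) A)
    (N : Matrix (Fin n) (Fin k) A) (X : Matrix (Fin m) (Fin m) V) :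
    P.conj N (P.conj M X) = P.conj (M * N) X := by
  rw [conj, conj, conj, P.amul_vmul, P.amul_amul, P.vmul_vmul, Matrix.conjTranspose_mul]

lemma conj_apply {m n : ℕ} (M : Matrix (Fin m) (Fin n) A)
    (X : Matrix (Fin m) (Fin m) V) (i j : Fin n) :
    P.conj M X i j = ∑ q, ∑ p, P.r (P.l (star (M p i)) (X p q)) (M q j) := by
  simp only [conj, vmul, amul, Matrix.of_apply, P.r_sum, Matrix.conjTranspose_apply]

lemma conj_add {m n : ℕ} (M : Matrix (Fin m) (Fin n) A)
    (X Y : Matrix (Fin m) (Fin m) V) :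
    P.conj M (X + Y) = P.conj M X + P.conj M Y := by
  ext i j
  simp only [Matrix.add_apply, P.conj_apply, P.add_l, P.r_add, Finset.sum_add_distrib]

lemma conj_smul {m n : ℕ} (c : ℂ) (M : Matrix (Fin m) (Fin n) A)
    (X : Matrix (Fin m) (Fin m) V) :
    P.conj M (c • X) = c • P.conj M X := by
  ext i j
  simp only [Matrix.smul_apply, P.conj_apply, P.l_smul, P.smul_r, Finset.smul_sum]

lemma conj_zero {m n : ℕ} (M : Matrix (Fin m) (Fin n) A) :
    P.conj M (0 : Matrix (Fin m) (Fin m) V) = 0 := by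
  ext i j
  simp [P.conj_apply, P.l_zero, P.r_zero]

lemma conjTranspose_conj {m n : ℕ} (M : Matrix (Fin m) (Fin n) A)
    (X : Matrix (Fin m) (Fin m) V) :
    (P.conj M X)ᴴ = P.conj M Xᴴ := by
  ext i j
  simp only [Matrix.conjTranspose_apply, P.conj_apply, star_sum, P.star_r, P.star_l,
    star_star, P.l_r_assoc]
  exact Finset.sum_comm

lemma conjTranspose_matE (n : ℕ) : (P.matE n)ᴴ = P.matE n := by
  simp [matE, Matrix.diagonal_conjTranspose, P.e_isSelfAdjoint]

lemma conj_matE_mem_pos {n : ℕ} (C : Matrix (Fin n) (Fin 1) A) :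
    P.conj C (P.matE n) 0 0 ∈ P.pos := by
  have h : P.conj C (P.matE n) 0 0 = ∑ p, P.r (P.l (star (C p 0)) P.e) (C p 0) := by
    rw [P.conj_apply]
    refine Finset.sum_congr rfl fun q _ => ?_
    simp [matE, Matrix.diagonal_apply, apply_ite (P.l _), apply_ite (P.r · (C q 0)),
      P.l_zero, P.r_zero]
  rw [h]
  exact P.sum_mem_pos _ _ fun p _ => P.conj_mem (C p 0) P.e P.e_mem_pos

lemma add_mem_Cmin {n : ℕ} {X Y : Matrix (Fin n) (Fin n) V} (hX : X ∈ P.Cmin n)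
    (hY : Y ∈ P.Cmin n) : X + Y ∈ P.Cmin n := by
  refine ⟨by rw [Matrix.conjTranspose_add, hX.1, hY.1], fun C => ?_⟩
  rw [P.conj_add, Matrix.add_apply]
  exact P.pos_add_mem _ (hX.2 C) _ (hY.2 C)

lemma smul_mem_Cmin {n : ℕ} {t : ℝ} (ht : 0 ≤ t) {X : Matrix (Fin n) (Fin n) V}
    (hX : X ∈ P.Cmin n) : (t : ℂ) • X ∈ P.Cmin n := by
  refine ⟨by simp [Matrix.conjTranspose_smul, hX.1], fun C => ?_⟩
  rw [P.conj_smul, Matrix.smul_apply]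
  exact P.pos_smul_mem t ht _ (hX.2 C)

lemma zero_mem_Cmin (n : ℕ) : (0 : Matrix (Fin n) (Fin n) V) ∈ P.Cmin n :=
  ⟨Matrix.conjTranspose_zero, fun C => by simpa [P.conj_zero] using P.zero_mem_pos⟩

lemma conj_mem_Cmin {m n : ℕ} (M : Matrix (Fin m) (Fin n) A) {X : Matrix (Fin m) (Fin m) V}
    (hX : X ∈ P.Cmin m) : P.conj M X ∈ P.Cmin n :=
  ⟨by rw [P.conjTranspose_conj, hX.1], fun C => by rw [P.conj_conj]; exact hX.2 _⟩

lemma mem_Cmin_one_iff (X : Matrix (Fin 1) (Fin 1) V) : X ∈ P.Cmin 1 ↔ X 0 0 ∈ P.pos := by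
  constructor
  · intro hX
    simpa [P.conj_apply, P.one_l, P.r_one] using hX.2 (Matrix.of fun _ _ => 1)
  · intro hx
    refine ⟨?_, fun C => ?_⟩
    · ext i j
      rw [Matrix.conjTranspose_apply, Subsingleton.elim i 0, Subsingleton.elim j 0,
        P.pos_isSelfAdjoint _ hx]
    · simpa [P.conj_apply] using P.conj_mem _ _ hx

lemma mem_Cmin_of_forall_add_smul_matE {n : ℕ} {X : Matrix (Fin n) (Fin n) V}
    (hX : ∀ t : ℝ, 0 < t → X + (t : ℂ) • P.matE n ∈ P.Cmin n) : X ∈ P.Cmin n := by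
  have h_herm : Xᴴ = X := by
    simpa [P.conjTranspose_matE] using (hX 1 one_pos).1
  refine ⟨h_herm, fun C => P.e_arch _ fun u hu => ?_⟩
  -- `C* e_n C ≤ s e`, so `C* X C + u e ≥ C* (X + (u/s) e_n) C ≥ 0`.
  have h_pos := P.conj_matE_mem_pos C
  obtain ⟨s, hs, h_bound⟩ := P.e_orderUnit _ (P.pos_isSelfAdjoint _ h_pos)
  have h_us : 0 < u / s := by positivity
  have h_sum := P.pos_add_mem _ ((hX (u / s) h_us).2 C) _ (P.pos_smul_mem _ h_us.le _ h_bound)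
  have h_eq : P.conj C (X + ((u / s : ℝ) : ℂ) • P.matE n) 0 0
      + ((u / s : ℝ) : ℂ) • ((s : ℂ) • P.e - P.conj C (P.matE n) 0 0)
      = P.conj C X 0 0 + (u : ℂ) • P.e := by
    have hs' : (s : ℂ) ≠ 0 := Complex.ofReal_ne_zero.mpr hs.ne'
    rw [P.conj_add, P.conj_smul, Matrix.add_apply, Matrix.smul_apply, smul_sub, smul_smul]
    push_cast
    rw [div_mul_cancel₀ _ hs']
    abel
  rwa [h_eq] at h_sum

section ScalarColumns

variable [StarModule ℂ A]

lemma conj_smul_one_apply {n : ℕ} (c : Fin n → ℂ) (X : Matrix (Fin n) (Fin n) V) :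
    P.conj (Matrix.of fun p (_ : Fin 1) => c p • (1 : A)) X 0 0 = X.sesq c c := by
  simp only [P.conj_apply, Matrix.sesq, Matrix.of_apply, star_smul, star_one, P.smul_l, P.one_l,
    P.r_smul, P.r_one, smul_smul, mul_comm]

lemma Cmin_salient {n : ℕ} {X : Matrix (Fin n) (Fin n) V} (hX : X ∈ P.Cmin n)
    (hnX : -X ∈ P.Cmin n) : X = 0 := by
  refine X.eq_zero_of_forall_sesq_self_eq_zero fun c => P.pos_salient _ ?_ ?_
  · rw [← P.conj_smul_one_apply]
    exact hX.2 _
  · rw [← Matrix.sesq_neg, ← P.conj_smul_one_apply]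
    exact hnX.2 _

end ScalarColumns

section OperatorSystemStructure

variable {P} {Q : ∀ n : ℕ, Set (Matrix (Fin n) (Fin n) V)}

lemma IsOperatorSystemStructure.subset_Cmin (hQ : P.IsOperatorSystemStructure Q) (n : ℕ) :
    Q n ⊆ P.Cmin n := fun X hX =>
  ⟨hQ.herm n X hX, fun C => (hQ.level_one _).mp (hQ.compat n 1 X C hX)⟩

variable [StarModule ℂ A]

lemma IsOperatorSystemStructure.isOperatorSystemStructure_Cmin
    (hQ : P.IsOperatorSystemStructure Q) :
    P.IsOperatorSystemStructure P.Cmin where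
  herm _ _ hX := hX.1
  add_mem _ _ hX _ hY := P.add_mem_Cmin hX hY
  smul_mem _ _ ht _ hX := P.smul_mem_Cmin ht hX
  nonempty n := ⟨0, P.zero_mem_Cmin n⟩
  salient _ _ hX hnX := P.Cmin_salient hX hnX
  compat _ _ _ M hX := P.conj_mem_Cmin M hX
  level_one := P.mem_Cmin_one_iff
  orderUnit n X hX := by
    obtain ⟨t, ht, h⟩ := hQ.orderUnit n X hX
    exact ⟨t, ht, hQ.subset_Cmin n h⟩
  arch _ _ hX := P.mem_Cmin_of_forall_add_smul_matE hX

end OperatorSystemStructure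

end AOUPack

universe u

/-- Theorem 3.3 (ii): if every positive `𝒜`-bimodule map from any operator `𝒜`-system
into `(V, (Q_n), e)` is completely positive, then `(Q_n)` is the minimal operator
`𝒜`-system structure (the identity is a unital `𝒜`-bimodule complete order
isomorphism onto `omin_𝒜(V)`). -/
theorem eq_cmin_of_univ_property
    {A : Type*} [CStarAlgebra A]
    {V : Type u} [AddCommGroup V] [Module ℂ V] [StarAddMonoid V] [StarModule ℂ V]
    (P : AOUPack A V) (Q : ∀ n : ℕ, Set (Matrix (Fin n) (Fin n) V))
    (hQ : P.IsOperatorSystemStructure Q)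
    (huniv : ∀ (S : Type u) [AddCommGroup S] [Module ℂ S] [StarAddMonoid S]
      [StarModule ℂ S] (PS : AOUPack A S)
      (QS : ∀ n : ℕ, Set (Matrix (Fin n) (Fin n) S)),
      PS.IsOperatorSystemStructure QS →
      ∀ φ : S →ₗ[ℂ] V,
        (∀ (a : A) (x : S), φ (PS.l a x) = P.l a (φ x)) →
        (∀ (x : S) (a : A), φ (PS.r x a) = P.r (φ x) a) →
        (∀ x ∈ PS.pos, φ x ∈ P.pos) →
        ∀ n : ℕ, ∀ X ∈ QS n, X.map φ ∈ Q n) :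
    ∀ n : ℕ, Q n = P.Cmin n := fun n =>
  (hQ.subset_Cmin n).antisymm fun X hX => by
    simpa using huniv V P P.Cmin hQ.isOperatorSystemStructure_Cmin LinearMap.id
      (fun _ _ => rfl) (fun _ _ => rfl) (fun _ hx => hx) n X hX
end
end

section
/- Let 𝒜 be a unital C*-algebra and (V, V⁺, e) an AOU 𝒜-space. Assume V carries a topology making it a Hausdorff topological complex vector space, and give each M_n(V) the entrywise (product) topology. For n ∈ ℕ let W_n denote the closure of C_n^{max}(V;𝒜) in M_n(V). If (P_n)_{n∈ℕ} is any operator 𝒜-system structure on V such that each P_n is closed in M_n(V), then W_n ⊆ P_n for every n ∈ ℕ. (This is the minimality assertion of Theorem 5.7 for dual operator 𝒜-system structures.) -/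
open Matrix

noncomputable section

namespace AOUPack.IsOperatorSystemStructure

variable {A V : Type*} [Ring A] [StarRing A] [Algebra ℂ A]
  [AddCommGroup V] [Module ℂ V] [StarAddMonoid V] [StarModule ℂ V]
  {P : AOUPack A V} {Q : ∀ n : ℕ, Set (Matrix (Fin n) (Fin n) V)}

theorem zero_mem (hQ : P.IsOperatorSystemStructure Q) (n : ℕ) : 0 ∈ Q n := by
  obtain ⟨X, hX⟩ := hQ.nonempty n
  simpa using hQ.smul_mem n 0 le_rfl X hX

theorem sum_mem (hQ : P.IsOperatorSystemStructure Q) {n : ℕ} {ι : Type*} (s : Finset ι)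
    {X : ι → Matrix (Fin n) (Fin n) V} (hX : ∀ i ∈ s, X i ∈ Q n) : ∑ i ∈ s, X i ∈ Q n :=
  Finset.sum_induction X (· ∈ Q n) (fun _ _ hY hZ => hQ.add_mem n _ hY _ hZ)
    (hQ.zero_mem n) hX

theorem dmax_subset (hQ : P.IsOperatorSystemStructure Q) (n : ℕ) : P.Dmax n ⊆ Q n := by
  rintro _ ⟨k, x, a, hx, rfl⟩
  exact hQ.sum_mem _ fun i _ => hQ.compat 1 n _ (a i) ((hQ.level_one _).2 (hx i))

theorem cmax_subset (hQ : P.IsOperatorSystemStructure Q) (n : ℕ) : P.Cmax n ⊆ Q n :=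
  fun X hX => hQ.arch n X fun t ht => hQ.dmax_subset n (hX t ht)

end AOUPack.IsOperatorSystemStructure

theorem closure_cmax_subset_closed_opSysStructure_general
    {A V : Type*} [CStarAlgebra A]
    [AddCommGroup V] [Module ℂ V] [StarAddMonoid V] [StarModule ℂ V]
    [TopologicalSpace V]
    (P : AOUPack A V) (Q : ∀ n : ℕ, Set (Matrix (Fin n) (Fin n) V))
    (hQ : P.IsOperatorSystemStructure Q)
    (hQclosed : ∀ n : ℕ, IsClosed (Q n)) :
    ∀ n : ℕ, closure (P.Cmax n) ⊆ Q n :=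
  fun n => (hQclosed n).closure_subset_iff.2 (hQ.cmax_subset n)

/-- Theorem 5.7 (minimality): if `(P_n)` is an operator `𝒜`-system structure on `V`
with each `P_n` closed in the entrywise topology, then the closure of
`C_n^{max}(V;𝒜)` is contained in `P_n` for every `n`. -/
theorem closure_cmax_subset_closed_opSysStructure
    {A V : Type*} [CStarAlgebra A]
    [AddCommGroup V] [Module ℂ V] [StarAddMonoid V] [StarModule ℂ V]
    [TopologicalSpace V] [T2Space V] [IsTopologicalAddGroup V] [ContinuousSMul ℂ V]
    (P : AOUPack A V) (Q : ∀ n : ℕ, Set (Matrix (Fin n) (Fin n) V))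
    (hQ : P.IsOperatorSystemStructure Q)
    (hQclosed : ∀ n : ℕ, IsClosed (Q n)) :
    ∀ n : ℕ, closure (P.Cmax n) ⊆ Q n :=
  closure_cmax_subset_closed_opSysStructure_general P Q hQ hQclosed
end
end
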